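/- arXiv:2006.02918 — 3 statements merged into one kernel-verified Lean document; each statement's English description precedes it below -/
import Mathlib

section
/- For every nonnegative integer n: ∑_{k=0}^{n} (3n+k+2) · (−n)_k(1/3−n)_k/[(1)_k(−3n)_k] · (9/8)^k = 3 · 2^{4/3−n} · Γ(2/3)Γ(7/6+n)/[Γ(1/2)Γ(1/3+n)]. -/
/-!
Both sides satisfy the first-order recurrence `4 (3n+1) a(n+1) = (6n+7) a(n)` and equal `2`
at `n = 0`. For the right-hand side this is `Γ(s+1) = s Γ(s)`, and the initial value is
Legendre's duplication formula at `s = 1/6`. For the sum it is Zeilberger's creative telescoping: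
with `F n k` the summand there is a certificate `G n k`, a polynomial multiple of the hypergeometric
term, such that `G n (k+1) - G n k = 4 (3n+1) F (n+1) k - (6n+7) F n k`; summing over `k`
telescopes, because `(-n)_k` vanishes for `k > n`.
-/

open Polynomial Finset

theorem ascPochhammer_eval_add {R : Type*} [CommSemiring R] (x : R) (m n : ℕ) :
    (ascPochhammer R (m + n)).eval x =
      (ascPochhammer R m).eval x * (ascPochhammer R n).eval (x + m) := by
  rw [← ascPochhammer_mul, eval_mul, eval_comp]
  simp

theorem ascPochhammer_succ_eval_left {R : Type*} [CommSemiring R] (x : R) (n : ℕ) :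
    (ascPochhammer R (n + 1)).eval x = x * (ascPochhammer R n).eval (x + 1) := by
  rw [add_comm, ascPochhammer_eval_add]
  simp

theorem ascPochhammer_eval_neg_natCast_ne_zero {R : Type*} [CommRing R] [IsDomain R]
    [CharZero R] {n N : ℕ} (h : n ≤ N) : (ascPochhammer R n).eval (-(N : R)) ≠ 0 := by
  rw [ne_eq, ascPochhammer_eval_eq_zero_iff]
  rintro ⟨k, hk, hkN⟩
  rw [neg_neg, Nat.cast_inj] at hkN
  omega

theorem eq_of_first_order_recurrence {M : Type*} [MonoidWithZero M] [IsLeftCancelMulZero M]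
    {a b c d : ℕ → M} (hc : ∀ n, c n ≠ 0) (ha : ∀ n, c n * a (n + 1) = d n * a n)
    (hb : ∀ n, c n * b (n + 1) = d n * b n) (h0 : a 0 = b 0) : a = b := by
  funext n
  induction n with
  | zero => exact h0
  | succ n ih => exact mul_left_cancel₀ (hc n) (by rw [ha, hb, ih])

namespace StrangeIdentityJ

noncomputable def term (n k : ℕ) : ℝ :=
  ((ascPochhammer ℝ k).eval (-(n : ℝ)) * (ascPochhammer ℝ k).eval (1 / 3 - (n : ℝ))) /
    ((ascPochhammer ℝ k).eval 1 * (ascPochhammer ℝ k).eval (-(3 * n : ℝ))) * (9 / 8 : ℝ) ^ k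

noncomputable def summand (n k : ℕ) : ℝ := (3 * n + k + 2) * term n k

/-- The polynomial factor is the output of Zeilberger's algorithm on `summand`. -/
noncomputable def certificate (n : ℕ) : ℕ → ℝ
  | 0 => 0
  | k + 1 =>
    (18 * n ^ 2 - 6 * n * (k + 1) - 4 * (k + 1) ^ 2 + 45 * n - 15 * (k + 1) + 25) * term n k

theorem term_zero (n : ℕ) : term n 0 = 1 := by
  simp [term]

theorem term_of_lt {n k : ℕ} (h : n < k) : term n k = 0 := by
  simp [term, ascPochhammer_eval_neg_coe_nat_of_lt h]

theorem ascPochhammer_eval_neg_three_mul_ne_zero {n k : ℕ} (h : k ≤ 3 * n) :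
    (ascPochhammer ℝ k).eval (-(3 * n : ℝ)) ≠ 0 := by
  exact_mod_cast ascPochhammer_eval_neg_natCast_ne_zero (R := ℝ) h

theorem term_succ {n k : ℕ} (hk : k < 3 * n) :
    8 * (k + 1) * (3 * n - k) * term n (k + 1) =
      3 * (n - k) * (3 * k + 1 - 3 * n) * term n k := by
  have hc := (ascPochhammer_pos k (1 : ℝ) one_pos).ne'
  have hd := ascPochhammer_eval_neg_three_mul_ne_zero hk.le
  have hk' : (3 * n : ℝ) - k ≠ 0 := by
    rw [sub_ne_zero]
    exact_mod_cast hk.ne'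
  simp only [term, ascPochhammer_succ_eval, pow_succ]
  rw [show -(3 * n : ℝ) + k = -(3 * n - k) by ring]
  field_simp
  ring

theorem term_succ_succ {n k : ℕ} (hk : k ≤ 3 * n) :
    8 * (k + 1) * (3 * n + 1) * term (n + 1) (k + 1) =
      -((3 * n + 1 - k) * (3 * n + 2 - k)) * term n k := by
  have hc := (ascPochhammer_pos k (1 : ℝ) one_pos).ne'
  have hd := ascPochhammer_eval_neg_three_mul_ne_zero hk
  have hk_le : (k : ℝ) ≤ 3 * n := by exact_mod_cast hk
  have hk1 : (k : ℝ) - 3 * n - 2 ≠ 0 := by linarith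
  have hk2 : (k : ℝ) - 3 * n - 1 ≠ 0 := by linarith
  -- `(x)_(k+3)` expanded from both ends, at `x = -3(n+1)`
  have hshift : (ascPochhammer ℝ (k + 1)).eval (-(3 * (n + 1) : ℝ)) =
      -((3 * n + 1) * (3 * n + 2) * (3 * n + 3)) * (ascPochhammer ℝ k).eval (-(3 * n : ℝ)) /
        ((k - 3 * n - 2) * (k - 3 * n - 1)) := by
    have h3 : ∀ x : ℝ, (ascPochhammer ℝ 3).eval x = x * (x + 1) * (x + 2) := fun x => by
      simp [ascPochhammer_succ_eval]
    have h := ascPochhammer_eval_add (-(3 * (n + 1) : ℝ)) 3 k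
    rw [show 3 + k = k + 1 + 1 + 1 by ring, ascPochhammer_succ_eval, ascPochhammer_succ_eval, h3,
      show -(3 * ((n : ℝ) + 1)) + ((3 : ℕ) : ℝ) = -(3 * n) by push_cast; ring] at h
    push_cast at h
    rw [eq_div_iff (mul_ne_zero hk1 hk2)]
    linear_combination h
  simp only [term]
  push_cast
  rw [hshift, ascPochhammer_succ_eval_left, ascPochhammer_succ_eval_left, ascPochhammer_succ_eval,
    pow_succ, show -((n : ℝ) + 1) + 1 = -n by ring,
    show 1 / 3 - ((n : ℝ) + 1) + 1 = 1 / 3 - n by ring]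
  field_simp
  ring

theorem certificate_succ_sub (n : ℕ) {k : ℕ} (hk : k ≤ 3 * n) :
    certificate n (k + 1) - certificate n k =
      4 * (3 * n + 1) * summand (n + 1) k - (6 * n + 7) * summand n k := by
  rcases k with _ | k
  · simp only [certificate, summand, term_zero]
    push_cast
    ring
  · have hk' : k < 3 * n := by omega
    have hM : (8 * (k + 1) * (3 * n - k) * (3 * n + 1) : ℝ) ≠ 0 := by
      have : (k : ℝ) < 3 * n := by exact_mod_cast hk'
      have : (0 : ℝ) < 3 * n - k := by linarith
      positivity
    simp only [certificate, summand]
    push_cast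
    refine mul_left_cancel₀ hM ?_
    linear_combination
      (3 * n + 1) * (18 * n ^ 2 - 6 * n * (k + 2) - 4 * (k + 2) ^ 2 + 45 * n - 15 * (k + 2) + 25
        + (6 * n + 7) * (3 * n + k + 3)) * term_succ hk'
      - 4 * (3 * n + 1) * (3 * n + k + 6) * (3 * n - k) * term_succ_succ hk'.le

theorem sum_summand_recurrence (n : ℕ) :
    4 * (3 * n + 1) * ∑ k ∈ range (n + 2), summand (n + 1) k =
      (6 * n + 7) * ∑ k ∈ range (n + 1), summand n k := by
  -- the telescoping below needs `k ≤ 3 n` for all `k ≤ n + 1`, which fails at `n = 0`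
  rcases Nat.eq_zero_or_pos n with rfl | hn
  · norm_num [sum_range_succ, summand, term]
  have htel := sum_range_sub (certificate n) (n + 2)
  rw [sum_congr rfl fun k hk => certificate_succ_sub n (by simp at hk; omega), sum_sub_distrib,
    ← mul_sum, ← mul_sum, sum_range_succ (summand n) (n + 1)] at htel
  have hlast : summand n (n + 1) = 0 := by simp [summand, term_of_lt n.lt_succ_self]
  have htop : certificate n (n + 2) = 0 := by simp [certificate, term_of_lt n.lt_succ_self]
  rw [hlast, htop, certificate] at htel
  linarith

noncomputable def closedForm (n : ℕ) : ℝ :=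
  3 * (2 : ℝ) ^ ((4 : ℝ) / 3 - (n : ℝ)) *
    (Real.Gamma (2 / 3) * Real.Gamma (7 / 6 + n) / (Real.Gamma (1 / 2) * Real.Gamma (1 / 3 + n)))

theorem closedForm_zero : closedForm 0 = 2 := by
  have hdup := Real.Gamma_mul_Gamma_add_half (1 / 6)
  have h76 : Real.Gamma (7 / 6) = Real.Gamma (1 / 6) / 6 := by
    rw [show (7 / 6 : ℝ) = 1 / 6 + 1 by norm_num, Real.Gamma_add_one (by norm_num)]
    ring
  have hpow : (2 : ℝ) ^ ((4 : ℝ) / 3) * 2 ^ ((2 : ℝ) / 3) = 4 := by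
    rw [← Real.rpow_add two_pos]
    norm_num
  have hG : Real.Gamma (1 / 3) ≠ 0 := (Real.Gamma_pos_of_pos (by norm_num)).ne'
  simp only [closedForm, CharP.cast_eq_zero, sub_zero, add_zero, h76, Real.Gamma_one_half_eq]
  norm_num at hdup
  field_simp
  linear_combination
    3 * (2 : ℝ) ^ ((4 : ℝ) / 3) * hdup + 3 * Real.Gamma (1 / 3) * √Real.pi * hpow

theorem closedForm_recurrence (n : ℕ) :
    4 * (3 * n + 1) * closedForm (n + 1) = (6 * n + 7) * closedForm n := by
  have h76 : Real.Gamma (7 / 6 + (n + 1 : ℕ)) = (7 / 6 + n) * Real.Gamma (7 / 6 + n) := by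
    rw [Nat.cast_succ, ← add_assoc, Real.Gamma_add_one (by positivity)]
  have h13 : Real.Gamma (1 / 3 + (n + 1 : ℕ)) = (1 / 3 + n) * Real.Gamma (1 / 3 + n) := by
    rw [Nat.cast_succ, ← add_assoc, Real.Gamma_add_one (by positivity)]
  have h2 : (2 : ℝ) ^ ((4 : ℝ) / 3 - (n + 1 : ℕ)) = 2 ^ ((4 : ℝ) / 3 - n) / 2 := by
    rw [Nat.cast_succ, ← sub_sub, Real.rpow_sub two_pos, Real.rpow_one]
  have hG : Real.Gamma (1 / 3 + n) ≠ 0 := (Real.Gamma_pos_of_pos (by positivity)).ne'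
  simp only [closedForm, h76, h13, h2]
  field_simp
  ring

end StrangeIdentityJ

open StrangeIdentityJ in
theorem strange_identity_J (n : ℕ) :
    ∑ k ∈ Finset.range (n + 1),
      ((3 * n + k + 2 : ℝ)) *
        ((ascPochhammer ℝ k).eval (-(n : ℝ)) * (ascPochhammer ℝ k).eval (1 / 3 - (n : ℝ))) /
        ((ascPochhammer ℝ k).eval 1 * (ascPochhammer ℝ k).eval (-(3 * n : ℝ))) *
        (9 / 8 : ℝ) ^ k
      = 3 * (2 : ℝ) ^ ((4 : ℝ) / 3 - (n : ℝ)) *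
          (Real.Gamma (2 / 3) * Real.Gamma (7 / 6 + n) /
            (Real.Gamma (1 / 2) * Real.Gamma (1 / 3 + n))) := by
  have hsum : (fun n => ∑ k ∈ range (n + 1), summand n k) = closedForm :=
    eq_of_first_order_recurrence (fun n => by positivity) sum_summand_recurrence
      closedForm_recurrence (by simp [summand, term_zero, closedForm_zero])
  calc _ = ∑ k ∈ range (n + 1), summand n k :=
        sum_congr rfl fun k _ => by rw [summand, term]; ring
    _ = closedForm n := congrFun hsum n
end

section
/- For every nonnegative integer n: ∑_{k=0}^{n} (−n)_k(−1/2−n)_k/[(1)_k(−4n−2)_k] · (8/9)^k = 3^{n+1}·Γ(n+5/6)Γ(n+7/6)/(2·Γ(1/2)·Γ(2n+3/2)). -/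
/-!
The sum is a terminating hypergeometric sum, so Zeilberger's algorithm applies: writing `F n k`
for the summand, there is a certificate `G n k = R(n, k) F n k` with `R` rational such that
`3 (4n+3)(4n+5) F (n+1) k - (6n+5)(6n+7) F n k` telescopes to differences of `G` in `k`.
Summing over `k` shows that `S n = ∑ₖ F n k` satisfies the first-order recurrence
`3 (4n+3)(4n+5) S (n+1) = (6n+5)(6n+7) S n`. By `Γ (x + 1) = x Γ x` the Gamma quotient satisfies
the same recurrence, and both sides equal `1` at `n = 0`, the Gamma side by the reflection formula
`Γ(1/6) Γ(5/6) = 2π` and `Γ(1/2)² = π`.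
-/

open Finset Polynomial

section Pochhammer

variable {S : Type*} [CommSemiring S]

theorem ascPochhammer_succ_left_eval (k : ℕ) (x : S) :
    (ascPochhammer S (k + 1)).eval x = x * (ascPochhammer S k).eval (x + 1) := by
  simp [ascPochhammer_succ_left, eval_comp]

theorem ascPochhammer_eval_mul_eval_add_comm (k m : ℕ) (x : S) :
    (ascPochhammer S k).eval x * (ascPochhammer S m).eval (x + k)
      = (ascPochhammer S m).eval x * (ascPochhammer S k).eval (x + m) := by
  have h := congrArg (eval x) ((ascPochhammer_mul S k m).trans
    (add_comm k m ▸ (ascPochhammer_mul S m k).symm))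
  simpa [eval_comp] using h

end Pochhammer

theorem eq_of_mul_succ_eq_mul {M : Type*} [MonoidWithZero M] [IsLeftCancelMulZero M]
    {p q a b : ℕ → M} (hp : ∀ n, p n ≠ 0) (ha : ∀ n, p n * a (n + 1) = q n * a n)
    (hb : ∀ n, p n * b (n + 1) = q n * b n) (h0 : a 0 = b 0) : a = b := by
  funext n
  induction n with
  | zero => exact h0
  | succ n ih => exact mul_left_cancel₀ (hp n) (by rw [ha, hb, ih])

namespace StrangeEvaluation

noncomputable def term (n k : ℕ) : ℝ :=
  (ascPochhammer ℝ k).eval (-(n : ℝ)) * (ascPochhammer ℝ k).eval (-1 / 2 - (n : ℝ)) /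
    ((ascPochhammer ℝ k).eval 1 * (ascPochhammer ℝ k).eval (-(4 * n : ℝ) - 2)) *
    (8 / 9 : ℝ) ^ k

theorem term_zero_right (n : ℕ) : term n 0 = 1 := by
  simp [term]

theorem term_self_succ (n : ℕ) : term n (n + 1) = 0 := by
  simp [term, ascPochhammer_succ_eval]

theorem term_succ_right (n k : ℕ) :
    term n (k + 1) = term n k *
      ((k - n) * (k - 1 / 2 - n) * (8 / 9) / ((k + 1) * (k - 4 * n - 2))) := by
  simp only [term, ascPochhammer_succ_eval, div_eq_mul_inv, mul_inv]
  ring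

theorem term_succ_succ (n k : ℕ) (hk : k ≤ n) :
    term (n + 1) (k + 1) = term n k *
      ((k - 4 * n - 5) * (k - 4 * n - 4) * (k - 4 * n - 3)
        / (18 * (k + 1) * (4 * n + 3) * (4 * n + 5))) := by
  have hkn : (k : ℝ) ≤ n := by exact_mod_cast hk
  have hn : (0 : ℝ) ≤ n := n.cast_nonneg
  have hshift : (ascPochhammer ℝ k).eval (-(4 * n : ℝ) - 5)
      = (-4 * n - 5) * (-4 * n - 4) * (-4 * n - 3) * (ascPochhammer ℝ k).eval (-(4 * n : ℝ) - 2)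
        / ((k - 4 * n - 5) * (k - 4 * n - 4) * (k - 4 * n - 3)) := by
    have h := ascPochhammer_eval_mul_eval_add_comm (S := ℝ) k 3 (-(4 * n : ℝ) - 5)
    simp only [ascPochhammer_succ_eval, ascPochhammer_zero, eval_one] at h
    rw [eq_div_iff (mul_ne_zero (mul_ne_zero (by linarith) (by linarith)) (by linarith))]
    convert h using 2 <;> push_cast <;> ring_nf
  calc term (n + 1) (k + 1)
      = term n k * (-(n + 1) * (-n - 3 / 2) * (8 / 9) *
          ((k - 4 * n - 5) * (k - 4 * n - 4) * (k - 4 * n - 3))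
            / ((k + 1) * ((-4 * n - 6) * (-4 * n - 5) * (-4 * n - 4) * (-4 * n - 3)))) := by
        simp only [term]
        push_cast
        rw [ascPochhammer_succ_eval _ (1 : ℝ), ascPochhammer_succ_left_eval,
          ascPochhammer_succ_left_eval, ascPochhammer_succ_left_eval,
          show -((n : ℝ) + 1) + 1 = -n by ring, show -1 / 2 - ((n : ℝ) + 1) + 1 = -1 / 2 - n by ring,
          show -(4 * ((n : ℝ) + 1)) - 2 + 1 = -(4 * n) - 5 by ring, hshift]
        simp only [div_eq_mul_inv, mul_inv, inv_inv]
        ring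
    _ = _ := by
        congr 1
        rw [div_eq_div_iff (mul_ne_zero (by positivity) (mul_ne_zero (mul_ne_zero (mul_ne_zero
          (by linarith) (by linarith)) (by linarith)) (by linarith))) (by positivity)]
        ring

/-- Zeilberger's certificate, shifted by one in `k`: it pairs with the summand at `k + 1`, so that
its denominator `k - 4n - 2` does not vanish for `k ≤ n`. -/
noncomputable def certificate (n k : ℕ) : ℝ :=
  (-342 - 996 * n - 936 * n ^ 2 - 288 * n ^ 3 + (k + 1) * (249 + 468 * n + 216 * n ^ 2)
    - 18 * (k + 1) ^ 2 - 9 * (k + 1) ^ 3) / (6 * (k - 4 * n - 2)) * term n k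

theorem certificate_self_succ (n : ℕ) : certificate n (n + 1) = 0 := by
  rw [certificate, term_self_succ, mul_zero]

theorem creative_telescoping_zero (n : ℕ) :
    3 * (4 * n + 3) * (4 * n + 5) * term (n + 1) 0 - (6 * n + 5) * (6 * n + 7) * term n 0
      = certificate n 0 := by
  have : (0 : ℝ) - 4 * n - 2 ≠ 0 := by linarith [(n.cast_nonneg : (0 : ℝ) ≤ n)]
  rw [certificate, term_zero_right, term_zero_right]
  push_cast
  field_simp
  ring

theorem creative_telescoping_succ (n k : ℕ) (hk : k ≤ n) :
    3 * (4 * n + 3) * (4 * n + 5) * term (n + 1) (k + 1)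
        - (6 * n + 5) * (6 * n + 7) * term n (k + 1)
      = certificate n (k + 1) - certificate n k := by
  have hkn : (k : ℝ) ≤ n := by exact_mod_cast hk
  have rational_identity : (3 : ℝ) * (4 * n + 3) * (4 * n + 5) *
        ((k - 4 * n - 5) * (k - 4 * n - 4) * (k - 4 * n - 3)
          / (18 * (k + 1) * (4 * n + 3) * (4 * n + 5)))
      - (6 * n + 5) * (6 * n + 7) * ((k - n) * (k - 1 / 2 - n) * (8 / 9) / ((k + 1) * (k - 4 * n - 2)))
      = (-342 - 996 * n - 936 * n ^ 2 - 288 * n ^ 3 + (k + 1 + 1) * (249 + 468 * n + 216 * n ^ 2)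
          - 18 * (k + 1 + 1) ^ 2 - 9 * (k + 1 + 1) ^ 3) / (6 * (k + 1 - 4 * n - 2))
          * ((k - n) * (k - 1 / 2 - n) * (8 / 9) / ((k + 1) * (k - 4 * n - 2)))
        - (-342 - 996 * n - 936 * n ^ 2 - 288 * n ^ 3 + (k + 1) * (249 + 468 * n + 216 * n ^ 2)
          - 18 * (k + 1) ^ 2 - 9 * (k + 1) ^ 3) / (6 * (k - 4 * n - 2)) := by
    have : (k : ℝ) + 1 ≠ 0 := by positivity
    have : (4 * n + 3 : ℝ) ≠ 0 := by positivity
    have : (4 * n + 5 : ℝ) ≠ 0 := by positivity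
    have : (k : ℝ) - 4 * n - 2 ≠ 0 := by linarith
    have : (k : ℝ) + 1 - 4 * n - 2 ≠ 0 := by linarith
    field_simp
    ring
  simp only [certificate, term_succ_succ n k hk, term_succ_right]
  push_cast
  linear_combination term n k * rational_identity

theorem sum_term_recurrence (n : ℕ) :
    3 * (4 * n + 3) * (4 * n + 5) * ∑ k ∈ range (n + 2), term (n + 1) k
      = (6 * n + 5) * (6 * n + 7) * ∑ k ∈ range (n + 1), term n k := by
  have telescope : ∑ k ∈ range (n + 2),
      (3 * (4 * n + 3) * (4 * n + 5) * term (n + 1) k - (6 * n + 5) * (6 * n + 7) * term n k)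
      = 0 := by
    rw [sum_range_succ', creative_telescoping_zero,
      sum_congr rfl fun k hk => creative_telescoping_succ n k (Nat.lt_succ_iff.mp (mem_range.mp hk)),
      sum_range_sub, certificate_self_succ]
    ring
  rw [sum_sub_distrib, ← mul_sum, ← mul_sum, sum_range_succ (term n), term_self_succ,
    add_zero, sub_eq_zero] at telescope
  exact telescope

noncomputable def gammaRatio (n : ℕ) : ℝ :=
  3 ^ (n + 1) * Real.Gamma ((n : ℝ) + 5 / 6) * Real.Gamma ((n : ℝ) + 7 / 6) /
    (2 * Real.Gamma (1 / 2) * Real.Gamma (2 * (n : ℝ) + 3 / 2))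

theorem gammaRatio_zero : gammaRatio 0 = 1 := by
  have h76 : Real.Gamma (7 / 6) = Real.Gamma (1 / 6) / 6 := by
    rw [show (7 / 6 : ℝ) = 1 / 6 + 1 by norm_num, Real.Gamma_add_one (by norm_num)]
    ring
  have h32 : Real.Gamma (3 / 2) = Real.Gamma (1 / 2) / 2 := by
    rw [show (3 / 2 : ℝ) = 1 / 2 + 1 by norm_num, Real.Gamma_add_one (by norm_num)]
    ring
  have reflection : Real.Gamma (1 / 6) * Real.Gamma (5 / 6) = 2 * Real.pi := by
    rw [show (5 / 6 : ℝ) = 1 - 1 / 6 by norm_num, Real.Gamma_mul_Gamma_one_sub,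
      show Real.pi * (1 / 6) = Real.pi / 6 by ring, Real.sin_pi_div_six]
    ring
  have gauss : Real.Gamma (1 / 2) * Real.Gamma (1 / 2) = Real.pi := by
    rw [Real.Gamma_one_half_eq, Real.mul_self_sqrt Real.pi_pos.le]
  have := Real.pi_pos.ne'
  simp only [gammaRatio, Nat.cast_zero, zero_add, mul_zero, h76, h32]
  rw [show (3 : ℝ) ^ 1 * Real.Gamma (5 / 6) * (Real.Gamma (1 / 6) / 6)
      = (Real.Gamma (1 / 6) * Real.Gamma (5 / 6)) / 2 by ring,
    show 2 * Real.Gamma (1 / 2) * (Real.Gamma (1 / 2) / 2)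
      = Real.Gamma (1 / 2) * Real.Gamma (1 / 2) by ring, reflection, gauss]
  field_simp

theorem gammaRatio_recurrence (n : ℕ) :
    3 * (4 * n + 3) * (4 * n + 5) * gammaRatio (n + 1)
      = (6 * n + 5) * (6 * n + 7) * gammaRatio n := by
  have h56 : Real.Gamma ((n + 1 : ℕ) + 5 / 6) = (n + 5 / 6) * Real.Gamma (n + 5 / 6) := by
    rw [Nat.cast_succ, add_right_comm, Real.Gamma_add_one (by positivity)]
  have h76 : Real.Gamma ((n + 1 : ℕ) + 7 / 6) = (n + 7 / 6) * Real.Gamma (n + 7 / 6) := by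
    rw [Nat.cast_succ, add_right_comm, Real.Gamma_add_one (by positivity)]
  have h32 : Real.Gamma (2 * (n + 1 : ℕ) + 3 / 2)
      = (2 * n + 5 / 2) * (2 * n + 3 / 2) * Real.Gamma (2 * n + 3 / 2) := by
    rw [show 2 * ((n + 1 : ℕ) : ℝ) + 3 / 2 = 2 * n + 3 / 2 + 1 + 1 by push_cast; ring,
      Real.Gamma_add_one (by positivity), Real.Gamma_add_one (by positivity)]
    ring
  have := (Real.Gamma_pos_of_pos (by positivity : (0 : ℝ) < 2 * n + 3 / 2)).ne'
  have := (Real.Gamma_pos_of_pos (by norm_num : (0 : ℝ) < 1 / 2)).ne'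
  simp only [gammaRatio, h56, h76, h32]
  field_simp
  ring

theorem sum_term_eq_gammaRatio (n : ℕ) : ∑ k ∈ range (n + 1), term n k = gammaRatio n :=
  congrFun (eq_of_mul_succ_eq_mul (p := fun n : ℕ => 3 * (4 * (n : ℝ) + 3) * (4 * n + 5))
    (a := fun n => ∑ k ∈ range (n + 1), term n k) (fun n => by positivity)
    sum_term_recurrence gammaRatio_recurrence (by simp [term_zero_right, gammaRatio_zero])) n

end StrangeEvaluation

theorem strange_identity_72b (n : ℕ) :
    ∑ k ∈ Finset.range (n + 1),
      (ascPochhammer ℝ k).eval (-(n : ℝ)) * (ascPochhammer ℝ k).eval (-1 / 2 - (n : ℝ)) /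
        ((ascPochhammer ℝ k).eval 1 * (ascPochhammer ℝ k).eval (-(4 * n : ℝ) - 2)) *
        (8 / 9 : ℝ) ^ k
      = 3 ^ (n + 1) * Real.Gamma ((n : ℝ) + 5 / 6) * Real.Gamma ((n : ℝ) + 7 / 6) /
          (2 * Real.Gamma (1 / 2) * Real.Gamma (2 * (n : ℝ) + 3 / 2)) :=
  StrangeEvaluation.sum_term_eq_gammaRatio n
end

section
/- For every positive integer n: ∑_{k=0}^{n} (−n)_k(1/2−n)_k/[(1)_k(−4n)_k] · (8/9)^k = Γ(1/2)Γ(3n)/(3^{2n−1}·Γ(2n+1/2)·Γ(n)). -/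
/-!
By the duplication formula `(x)_k (x + 1/2)_k 4^k = (2x)_{2k}` the summand for `k + m = n` equals
`(2n)! / ((4n)! 9^n)` times `t(k, m) = (-2)^k 9^m (3k + 4m)! / ((2m)! k!)`. Zeilberger's algorithm
gives a certificate turning `S n = ∑_{k+m=n} t(k, m)` into the first-order recurrence
`S (n+1) = 48 (3n+1)(3n+2) S n`, so `S n = 16^n (3n)! / n!`. The Gamma quotient evaluates to the
same product of factorials via `Γ(N) N = N!` and `Γ(m + 1/2) = √π (2m)! / (4^m m!)`.
-/

open Finset Nat

theorem ascPochhammer_eval_mul_eval_add_half {K : Type*} [Field K] (x : K) (k : ℕ) :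
    (ascPochhammer K k).eval x * (ascPochhammer K k).eval (x + 1 / 2) * 4 ^ k =
      (ascPochhammer K (2 * k)).eval (2 * x) := by
  induction k with
  | zero => simp
  | succ k ih =>
    -- also true when `2 = 0`, both sides being `0` then
    have four_mul_half : (4 : K) * (1 / 2) = 2 := by
      rcases eq_or_ne (2 : K) 0 with h2 | h2
      · linear_combination (2 * (1 / 2 : K) - 1) * h2
      · field_simp
        norm_num
    rw [show 2 * (k + 1) = 2 * k + 1 + 1 by ring, ascPochhammer_succ_eval, ascPochhammer_succ_eval,
      ascPochhammer_succ_eval, ascPochhammer_succ_eval, ← ih]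
    push_cast
    linear_combination (ascPochhammer K k).eval x * (ascPochhammer K k).eval (x + 1 / 2) * 4 ^ k *
      (x + k) * four_mul_half

theorem ascPochhammer_eval_neg_natCast_mul_factorial {R : Type*} [CommRing R] {N j : ℕ}
    (h : j ≤ N) : (ascPochhammer R j).eval (-(N : R)) * (N - j)! = (-1) ^ j * N ! := by
  rw [ascPochhammer_eval_neg_eq_descPochhammer, descPochhammer_eval_eq_descFactorial,
    ← Nat.factorial_mul_descFactorial h]
  push_cast
  ring

theorem Real.Gamma_nat_add_half_eq_factorial (m : ℕ) :
    Real.Gamma (m + 1 / 2) = √Real.pi * (2 * m)! / (4 ^ m * m !) := by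
  cases m with
  | zero => simp [-one_div, Real.Gamma_one_half_eq]
  | succ m =>
    rw [Nat.cast_succ, Real.Gamma_nat_add_one_add_half, show 2 * (m + 1) = 2 * m + 1 + 1 by ring,
      Nat.factorial_eq_mul_doubleFactorial, show 2 * m + 1 + 1 = 2 * (m + 1) by ring,
      Nat.doubleFactorial_two_mul, show (4 : ℝ) = 2 * 2 by norm_num, mul_pow]
    push_cast
    field_simp

theorem Real.Gamma_natCast_mul_self {N : ℕ} (hN : N ≠ 0) : Real.Gamma N * N = N ! := by
  rw [mul_comm, ← Real.Gamma_add_one (by positivity), Real.Gamma_nat_eq_factorial]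

namespace StrangeIdentity

noncomputable def term (k m : ℕ) : ℝ :=
  (-2) ^ k * 9 ^ m * (3 * k + 4 * m)! / ((2 * m)! * k !)

theorem term_succ_right (k m : ℕ) :
    term k (m + 1) = 9 * ((3 * k + 4 * m + 1) * (3 * k + 4 * m + 2) * (3 * k + 4 * m + 3) *
      (3 * k + 4 * m + 4)) / ((2 * m + 1) * (2 * m + 2)) * term k m := by
  rw [term, term, show 3 * k + 4 * (m + 1) = 3 * k + 4 * m + 1 + 1 + 1 + 1 by ring,
    show 2 * (m + 1) = 2 * m + 1 + 1 by ring]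
  simp only [Nat.factorial_succ]
  push_cast
  field_simp
  ring

theorem term_succ_left (k m : ℕ) :
    term (k + 1) m = -2 * ((3 * k + 4 * m + 1) * (3 * k + 4 * m + 2) * (3 * k + 4 * m + 3)) /
      (k + 1) * term k m := by
  rw [term, term, show 3 * (k + 1) + 4 * m = 3 * k + 4 * m + 1 + 1 + 1 by ring]
  simp only [Nat.factorial_succ]
  push_cast
  field_simp
  ring

/-- Zeilberger certificate for `S (n + 1) = 48 (3n + 1)(3n + 2) S n`,
`S n = ∑_{j ≤ n} term j (n - j)`, found by computer algebra. -/
noncomputable def certificate (n : ℕ) : ℕ → ℝ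
  | 0 => 0
  | j + 1 => 6 * (24 * n ^ 2 + 24 * n + 2 - 3 * j ^ 2 - 12 * n * j - 15 * j) * term j (n - j)

theorem term_sub_eq_certificate_sub {n j : ℕ} (h : j ≤ n) :
    term j (n + 1 - j) - 48 * (3 * n + 1) * (3 * n + 2) * term j (n - j) =
      certificate n (j + 1) - certificate n j := by
  obtain ⟨m, rfl⟩ := Nat.exists_eq_add_of_le h
  rcases j with _ | k
  · simp only [certificate, Nat.sub_zero, sub_zero, term_succ_right]
    push_cast
    field_simp
    ring
  · simp only [certificate, show k + 1 + m + 1 - (k + 1) = m + 1 by omega,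
      show k + 1 + m - (k + 1) = m by omega, show k + 1 + m - k = m + 1 by omega]
    rw [term_succ_left k (m + 1), term_succ_left k m, term_succ_right k m]
    push_cast
    field_simp
    ring

theorem term_succ_zero_eq_neg_certificate (n : ℕ) : term (n + 1) 0 = -certificate n (n + 1) := by
  simp only [certificate, Nat.sub_self, term_succ_left]
  push_cast
  field_simp
  ring

theorem sum_term_succ (n : ℕ) :
    ∑ j ∈ range (n + 2), term j (n + 1 - j) =
      48 * (3 * n + 1) * (3 * n + 2) * ∑ j ∈ range (n + 1), term j (n - j) := by
  have telescope : ∑ j ∈ range (n + 1),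
      (term j (n + 1 - j) - 48 * (3 * n + 1) * (3 * n + 2) * term j (n - j)) =
        certificate n (n + 1) := by
    rw [sum_congr rfl fun j hj =>
      term_sub_eq_certificate_sub (Nat.lt_succ_iff.mp (mem_range.mp hj)), sum_range_sub]
    exact sub_zero _
  rw [sum_range_succ, Nat.sub_self, term_succ_zero_eq_neg_certificate, ← telescope,
    sum_sub_distrib, mul_sum]
  ring

theorem sum_term (n : ℕ) : ∑ j ∈ range (n + 1), term j (n - j) = 16 ^ n * (3 * n)! / n ! := by
  induction n with
  | zero => simp [term]
  | succ n ih =>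
    rw [sum_term_succ, ih, show 3 * (n + 1) = 3 * n + 1 + 1 + 1 by ring]
    simp only [Nat.factorial_succ]
    push_cast
    field_simp
    ring

theorem summand_eq {n k : ℕ} (h : k ≤ n) :
    (ascPochhammer ℝ k).eval (-(n : ℝ)) * (ascPochhammer ℝ k).eval (1 / 2 - (n : ℝ)) /
        ((ascPochhammer ℝ k).eval 1 * (ascPochhammer ℝ k).eval (-(4 * n : ℝ))) * (8 / 9) ^ k =
      (2 * n)! / ((4 * n)! * 9 ^ n) * term k (n - k) := by
  have duplication := ascPochhammer_eval_mul_eval_add_half (-(n : ℝ)) k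
  rw [neg_add_eq_sub, show 2 * -(n : ℝ) = -((2 * n : ℕ) : ℝ) by push_cast; ring]
    at duplication
  have lower := ascPochhammer_eval_neg_natCast_mul_factorial (R := ℝ) (by omega : 2 * k ≤ 2 * n)
  have upper := ascPochhammer_eval_neg_natCast_mul_factorial (R := ℝ) (by omega : k ≤ 4 * n)
  obtain ⟨m, rfl⟩ := Nat.exists_eq_add_of_le h
  rw [show 2 * (k + m) - 2 * k = 2 * m by omega, pow_mul, neg_one_sq, one_pow] at lower
  rw [show 4 * (k + m) - k = 3 * k + 4 * m by omega] at upper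
  have numerator : (ascPochhammer ℝ k).eval (-((k + m : ℕ) : ℝ)) *
      (ascPochhammer ℝ k).eval (1 / 2 - ((k + m : ℕ) : ℝ)) =
        (2 * (k + m))! / ((2 * m)! * 4 ^ k) := by
    rw [eq_div_iff (by positivity)]
    linear_combination (2 * m)! * duplication + lower
  have denominator : (ascPochhammer ℝ k).eval (-((4 * (k + m) : ℕ) : ℝ)) =
      (-1) ^ k * (4 * (k + m))! / (3 * k + 4 * m)! := by
    rw [eq_div_iff (by positivity)]
    exact upper
  have ratio : (8 / 9 : ℝ) ^ k = (-2) ^ k * (-1) ^ k * 4 ^ k / 9 ^ k := by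
    rw [← mul_pow, ← mul_pow, ← div_pow]
    norm_num
  rw [ascPochhammer_eval_one, Nat.add_sub_cancel_left, term, numerator,
    show -(4 * ((k + m : ℕ) : ℝ)) = -((4 * (k + m) : ℕ) : ℝ) by push_cast; ring,
    denominator, ratio, pow_add]
  field_simp

theorem gamma_quotient_eq {n : ℕ} (hn : 0 < n) :
    Real.Gamma (1 / 2) * Real.Gamma (3 * (n : ℝ)) /
        (3 ^ (2 * n - 1) * Real.Gamma (2 * (n : ℝ) + 1 / 2) * Real.Gamma (n : ℝ)) =
      (2 * n)! / ((4 * n)! * 9 ^ n) * (16 ^ n * (3 * n)! / n !) := by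
  have gamma_three_mul := Real.Gamma_natCast_mul_self (N := 3 * n) (by omega)
  have gamma_n := Real.Gamma_natCast_mul_self hn.ne'
  have pow_three : (3 : ℝ) ^ (2 * n - 1) = 9 ^ n / 3 := by
    rw [eq_div_iff three_ne_zero, ← pow_succ, Nat.sub_add_cancel (by omega), pow_mul]
    norm_num
  push_cast at gamma_three_mul
  rw [Real.Gamma_one_half_eq, show 2 * (n : ℝ) + 1 / 2 = (2 * n : ℕ) + 1 / 2 by push_cast; ring,
    Real.Gamma_nat_add_half_eq_factorial, eq_div_of_mul_eq (by positivity) gamma_three_mul,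
    eq_div_of_mul_eq (by positivity) gamma_n, pow_three, show 2 * (2 * n) = 4 * n by ring, pow_mul]
  field_simp
  ring

end StrangeIdentity

theorem strange_identity_72a (n : ℕ) (hn : 0 < n) :
    ∑ k ∈ Finset.range (n + 1),
      (ascPochhammer ℝ k).eval (-(n : ℝ)) * (ascPochhammer ℝ k).eval (1 / 2 - (n : ℝ)) /
        ((ascPochhammer ℝ k).eval 1 * (ascPochhammer ℝ k).eval (-(4 * n : ℝ))) *
        (8 / 9 : ℝ) ^ k
      = Real.Gamma (1 / 2) * Real.Gamma (3 * (n : ℝ)) /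
          (3 ^ (2 * n - 1) * Real.Gamma (2 * (n : ℝ) + 1 / 2) * Real.Gamma (n : ℝ)) := by
  rw [sum_congr rfl fun k hk => StrangeIdentity.summand_eq (Nat.lt_succ_iff.mp (mem_range.mp hk)),
    ← mul_sum, StrangeIdentity.sum_term, StrangeIdentity.gamma_quotient_eq hn]
end
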